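/- arXiv:1208.4152 — 4 statements merged into one kernel-verified Lean document; each statement's English description precedes it below -/
import Mathlib

section
/- For a finite measure Λ on [0,1], define λ_{b,k} = ∫₀¹ x^{k-2}(1-x)^{b-k} Λ(dx) for 2 ≤ k ≤ b. Then the rates are consistent: λ_{b,k} = λ_{b+1,k} + λ_{b+1,k+1} for all 2 ≤ k ≤ b. -/
open MeasureTheory

/-- The Λ-coalescent merger rate λ_{b,k} = ∫₀¹ x^{k-2}(1-x)^{b-k} Λ(dx). -/
noncomputable def coalRate (Λ : Measure ℝ) (b k : ℕ) : ℝ :=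
  ∫ x in Set.Icc (0 : ℝ) 1, x ^ (k - 2) * (1 - x) ^ (b - k) ∂Λ

theorem setIntegral_pow_mul_one_sub_pow_eq_add {μ : Measure ℝ} [IsFiniteMeasureOnCompacts μ]
    {s : Set ℝ} (hs : IsCompact s) (i j : ℕ) :
    ∫ x in s, x ^ i * (1 - x) ^ j ∂μ =
      ∫ x in s, x ^ i * (1 - x) ^ (j + 1) ∂μ + ∫ x in s, x ^ (i + 1) * (1 - x) ^ j ∂μ := by
  have hcont : ∀ m n : ℕ, IntegrableOn (fun x : ℝ => x ^ m * (1 - x) ^ n) s μ := fun m n =>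
    (by fun_prop : Continuous fun x : ℝ => x ^ m * (1 - x) ^ n).continuousOn.integrableOn_compact hs
  rw [← integral_add (hcont i (j + 1)) (hcont (i + 1) j)]
  exact integral_congr_ae (Filter.Eventually.of_forall fun x => by ring)

/-- Consistency of the Λ-coalescent rates: λ_{b,k} = λ_{b+1,k} + λ_{b+1,k+1}. -/
theorem lambda_consistency (Λ : Measure ℝ) [IsFiniteMeasure Λ] (b k : ℕ)
    (hk : 2 ≤ k) (hkb : k ≤ b) :
    coalRate Λ b k = coalRate Λ (b + 1) k + coalRate Λ (b + 1) (k + 1) := by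
  unfold coalRate
  rw [show b + 1 - k = b - k + 1 by omega, show k + 1 - 2 = k - 2 + 1 by omega,
    show b + 1 - (k + 1) = b - k by omega]
  exact setIntegral_pow_mul_one_sub_pow_eq_add isCompact_Icc _ _
end

section
/- With the rates λ_{b,k} as above, define for b > m ≥ 2 the quantity γ_{b,m} = Σ_{k=2}^{b-m} (k-1) C(b,k) λ_{b,k} + Σ_{k=b-m+1}^{b} (b-m) C(b,k) λ_{b,k} when b ≥ m+2, and γ_{m+1,m} = Σ_{k=2}^{m+1} C(m+1,k) λ_{m+1,k}. Then γ_{b,m} ≤ γ_{b+1,m} for all 2 ≤ m < b. -/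
open MeasureTheory

/-- γ_{b,m}: the rate of decrease of the block counting process absorbed at m,
when there are b > m blocks.  For b = m+1 it equals the total rate
Σ_{k=2}^{m+1} C(m+1,k) λ_{m+1,k}. -/
noncomputable def gammaRate (Λ : Measure ℝ) (b m : ℕ) : ℝ :=
  if b = m + 1 then ∑ k ∈ Finset.Icc 2 b, (b.choose k : ℝ) * coalRate Λ b k
  else ∑ k ∈ Finset.Icc 2 (b - m), ((k : ℝ) - 1) * (b.choose k : ℝ) * coalRate Λ b k
    + ∑ k ∈ Finset.Icc (b - m + 1) b, ((b : ℝ) - (m : ℝ)) * (b.choose k : ℝ) * coalRate Λ b k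


/-!
Both rates are integrals against `Λ` of polynomials in `x ∈ [0, 1]`: `γ_{b,m} = ∫ g_b dΛ` with
`g_b(x) = ∑_{k=2}^b min(k-1, b-m) C(b,k) x^{k-2} (1-x)^{b-k}`, so it suffices to compare the
integrands pointwise. Multiplying `g_b` by `1 = (1 - x) + x` and expanding `g_{b+1}` with Pascal's
rule `C(b+1,k) = C(b,k) + C(b,k-1)` pairs every term of `g_b` with a term of `g_{b+1}` carrying the
same monomial and a weight at least as large, since `min(k-1, b-m)` increases in both `k` and `b`.
The one unpaired term of `g_{b+1}` is nonnegative.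
-/

open Finset

noncomputable def rateWeight (b m k : ℕ) : ℝ := min ((k : ℝ) - 1) ((b : ℝ) - m)

lemma rateWeight_nonneg {b m k : ℕ} (hb : m < b) (hk : 1 ≤ k) : 0 ≤ rateWeight b m k := by
  have hk' : (1 : ℝ) ≤ k := by exact_mod_cast hk
  have hb' : (m : ℝ) < b := by exact_mod_cast hb
  exact le_min (by linarith) (by linarith)

lemma rateWeight_le_succ (b m k : ℕ) : rateWeight b m k ≤ rateWeight (b + 1) m k :=
  min_le_min le_rfl (by push_cast; linarith)

lemma rateWeight_le_succ_succ (b m k : ℕ) : rateWeight b m k ≤ rateWeight (b + 1) m (k + 1) :=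
  min_le_min (by push_cast; linarith) (by push_cast; linarith)

lemma gammaRate_eq_sum (Λ : Measure ℝ) {b m : ℕ} (hb : m < b) :
    gammaRate Λ b m = ∑ k ∈ Icc 2 b, rateWeight b m k * b.choose k * coalRate Λ b k := by
  have hmb : ((b - m : ℕ) : ℝ) = b - m := Nat.cast_sub hb.le
  unfold gammaRate
  split_ifs with h
  · refine sum_congr rfl fun k hk => ?_
    have hk : (2 : ℝ) ≤ k := by exact_mod_cast (mem_Icc.1 hk).1
    have hw : rateWeight b m k = 1 := by
      subst h
      rw [rateWeight, min_eq_right] <;> push_cast <;> linarith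
    rw [hw, one_mul]
  · have hunion : Icc 2 b = Icc 2 (b - m) ∪ Icc (b - m + 1) b := by
      ext k; simp only [mem_union, mem_Icc]; omega
    have hdisj : Disjoint (Icc 2 (b - m)) (Icc (b - m + 1) b) := by
      simp only [disjoint_left, mem_Icc]; omega
    rw [hunion, sum_union hdisj]
    congr 1 <;> refine sum_congr rfl fun k hk => ?_
    · have hk : (k : ℝ) ≤ (b - m : ℕ) := by exact_mod_cast (mem_Icc.1 hk).2
      rw [rateWeight, min_eq_left (by linarith)]
    · have hk : ((b - m : ℕ) : ℝ) + 1 ≤ k := by exact_mod_cast (mem_Icc.1 hk).1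
      rw [rateWeight, min_eq_right (by linarith)]

noncomputable def rateDensity (w : ℕ → ℝ) (b : ℕ) (x : ℝ) : ℝ :=
  ∑ k ∈ Icc 2 b, w k * b.choose k * (x ^ (k - 2) * (1 - x) ^ (b - k))

section Integral

variable (Λ : Measure ℝ) [IsFiniteMeasure Λ]

lemma integrableOn_pow_mul_one_sub_pow (i j : ℕ) :
    IntegrableOn (fun x : ℝ => x ^ i * (1 - x) ^ j) (Set.Icc 0 1) Λ :=
  (by fun_prop : Continuous fun x : ℝ => x ^ i * (1 - x) ^ j).continuousOn.integrableOn_compact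
    isCompact_Icc

lemma integrableOn_rateDensity (w : ℕ → ℝ) (b : ℕ) :
    IntegrableOn (rateDensity w b) (Set.Icc 0 1) Λ :=
  integrable_finsetSum _ fun _ _ => (integrableOn_pow_mul_one_sub_pow Λ _ _).const_mul _

lemma integral_rateDensity (w : ℕ → ℝ) (b : ℕ) :
    ∫ x in Set.Icc (0 : ℝ) 1, rateDensity w b x ∂Λ =
      ∑ k ∈ Icc 2 b, w k * b.choose k * coalRate Λ b k := by
  simp only [rateDensity]
  rw [integral_finsetSum _ fun _ _ =>
    (integrableOn_pow_mul_one_sub_pow Λ _ _).const_mul _]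
  exact sum_congr rfl fun k _ => integral_const_mul _ _

lemma gammaRate_eq_integral {b m : ℕ} (hb : m < b) :
    gammaRate Λ b m = ∫ x in Set.Icc (0 : ℝ) 1, rateDensity (rateWeight b m) b x ∂Λ := by
  rw [gammaRate_eq_sum Λ hb, integral_rateDensity]

end Integral

section Pascal

variable (w : ℕ → ℝ) (b : ℕ) (x : ℝ)

lemma rateDensity_eq_add :
    rateDensity w b x =
      ∑ k ∈ Icc 2 b, w k * b.choose k * (x ^ (k - 2) * (1 - x) ^ (b + 1 - k)) +
        ∑ k ∈ Icc 2 b, w k * b.choose k * (x ^ (k - 1) * (1 - x) ^ (b - k)) := by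
  rw [rateDensity, ← sum_add_distrib]
  refine sum_congr rfl fun k hk => ?_
  obtain ⟨hk2, hkb⟩ := mem_Icc.1 hk
  rw [show k - 1 = k - 2 + 1 by omega, show b + 1 - k = b - k + 1 by omega, pow_succ, pow_succ]
  ring

lemma rateDensity_succ_eq_add :
    rateDensity w (b + 1) x =
      ∑ k ∈ Icc 2 b, w k * b.choose k * (x ^ (k - 2) * (1 - x) ^ (b + 1 - k)) +
        ∑ k ∈ Icc 1 b, w (k + 1) * b.choose k * (x ^ (k - 1) * (1 - x) ^ (b - k)) := by
  have hpascal : rateDensity w (b + 1) x =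
      ∑ k ∈ Icc 2 (b + 1), w k * b.choose k * (x ^ (k - 2) * (1 - x) ^ (b + 1 - k)) +
        ∑ k ∈ Icc 2 (b + 1), w k * b.choose (k - 1) * (x ^ (k - 2) * (1 - x) ^ (b + 1 - k)) := by
    rw [rateDensity, ← sum_add_distrib]
    refine sum_congr rfl fun k hk => ?_
    rw [Nat.choose_succ_left b k (by grind)]
    push_cast
    ring
  have htop : ∑ k ∈ Icc 2 (b + 1), w k * b.choose k * (x ^ (k - 2) * (1 - x) ^ (b + 1 - k)) =
      ∑ k ∈ Icc 2 b, w k * b.choose k * (x ^ (k - 2) * (1 - x) ^ (b + 1 - k)) := by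
    refine (sum_subset (Icc_subset_Icc_right b.le_succ) fun k hk hk' => ?_).symm
    rw [Nat.choose_eq_zero_of_lt (by grind), Nat.cast_zero, mul_zero, zero_mul]
  have hshift :
      ∑ k ∈ Icc 2 (b + 1), w k * b.choose (k - 1) * (x ^ (k - 2) * (1 - x) ^ (b + 1 - k)) =
        ∑ k ∈ Icc 1 b, w (k + 1) * b.choose k * (x ^ (k - 1) * (1 - x) ^ (b - k)) := by
    rw [← map_add_right_Icc 1 b 1, sum_map]
    refine sum_congr rfl fun k _ => ?_
    simp only [addRightEmbedding_apply, Nat.add_sub_cancel, Nat.add_sub_add_right,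
      show k + 1 - 2 = k - 1 by omega]
  rw [hpascal, htop, hshift]

end Pascal

lemma rateDensity_le_succ {w w' : ℕ → ℝ} {b : ℕ} {x : ℝ} (hx₀ : 0 ≤ x) (hx₁ : x ≤ 1)
    (hle : ∀ k ∈ Icc 2 b, w k ≤ w' k) (hle_succ : ∀ k ∈ Icc 2 b, w k ≤ w' (k + 1))
    (hnonneg : 0 ≤ w' 2) :
    rateDensity w b x ≤ rateDensity w' (b + 1) x := by
  have hx : 0 ≤ 1 - x := by linarith
  rw [rateDensity_eq_add, rateDensity_succ_eq_add]
  gcongr ?_ + ?_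
  · gcongr with k hk
    exact hle k hk
  · calc ∑ k ∈ Icc 2 b, w k * b.choose k * (x ^ (k - 1) * (1 - x) ^ (b - k))
        ≤ ∑ k ∈ Icc 2 b, w' (k + 1) * b.choose k * (x ^ (k - 1) * (1 - x) ^ (b - k)) := by
          gcongr with k hk
          exact hle_succ k hk
      _ ≤ ∑ k ∈ Icc 1 b, w' (k + 1) * b.choose k * (x ^ (k - 1) * (1 - x) ^ (b - k)) := by
          refine sum_le_sum_of_subset_of_nonneg (Icc_subset_Icc (by norm_num) le_rfl) ?_
          intro k hk hk'
          obtain rfl : k = 1 := by grind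
          positivity

theorem gammaRate_mono_general (Λ : Measure ℝ) [IsFiniteMeasure Λ] (m b : ℕ)
    (hb : m < b) :
    gammaRate Λ b m ≤ gammaRate Λ (b + 1) m := by
  rw [gammaRate_eq_integral Λ hb, gammaRate_eq_integral Λ (hb.trans b.lt_succ_self)]
  refine setIntegral_mono_on (integrableOn_rateDensity Λ _ _) (integrableOn_rateDensity Λ _ _)
    measurableSet_Icc fun x hx => rateDensity_le_succ hx.1 hx.2 ?_ ?_ ?_
  · exact fun k _ => rateWeight_le_succ b m k
  · exact fun k _ => rateWeight_le_succ_succ b m k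
  · exact rateWeight_nonneg (hb.trans b.lt_succ_self) one_le_two

/-- Monotonicity of the decrease rates: γ_{b,m} ≤ γ_{b+1,m} for all 2 ≤ m < b. -/
theorem gammaRate_mono (Λ : Measure ℝ) [IsFiniteMeasure Λ] (m b : ℕ)
    (hm : 2 ≤ m) (hb : m < b) :
    gammaRate Λ b m ≤ gammaRate Λ (b + 1) m :=
  gammaRate_mono_general Λ m b hb
end

section
/- Under the (c,ε,γ)-property, λ_n ≥ C(n,2) c ε^{1−γ} B(1−γ, n−1) for all n ≥ 2, where B is the Beta function; equivalently λ_n ≥ (c ε^{1−γ} n / 2) · (n−1)! Γ(1−γ) / Γ(n−γ). -/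
/-! Only the binary mergers are needed: `λ_n ≥ C(n,2) λ_{n,2}`. On `[0, ε]` the measure `Λ`
dominates `c x^{-γ} dx`, so `λ_{n,2} ≥ c ∫₀^ε x^{-γ} (1-x)^{n-2} dx`. Substituting `x = ε y` and
using `1 - ε y ≥ 1 - y` bounds this below by `c ε^{1-γ} ∫₀¹ y^{-γ} (1-y)^{n-2} dy`, which is
`c ε^{1-γ} B(1-γ, n-1)`. -/

open MeasureTheory

/-- The total coalescence rate λ_n = Σ_{k=2}^{n} C(n,k) λ_{n,k}. -/
noncomputable def totalRate (Λ : Measure ℝ) (n : ℕ) : ℝ :=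
  ∑ k ∈ Finset.Icc 2 n, (n.choose k : ℝ) * coalRate Λ n k

open Set

theorem intervalIntegral_rpow_mul_one_sub_rpow_eq_beta {a b : ℝ} (ha : 0 < a) (hb : 0 < b) :
    ∫ x in (0 : ℝ)..1, x ^ (a - 1) * (1 - x) ^ (b - 1) = ProbabilityTheory.beta a b := by
  have hcast : (Complex.betaIntegral a b : ℂ) =
      ((∫ x in (0 : ℝ)..1, x ^ (a - 1) * (1 - x) ^ (b - 1) : ℝ) : ℂ) := by
    rw [Complex.betaIntegral, ← intervalIntegral.integral_ofReal]
    refine intervalIntegral.integral_congr fun x hx => ?_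
    rw [uIcc_of_le zero_le_one] at hx
    rw [Complex.ofReal_mul, Complex.ofReal_cpow hx.1, Complex.ofReal_cpow (sub_nonneg.2 hx.2)]
    push_cast
    rfl
  rw [ProbabilityTheory.beta_eq_betaIntegralReal a b ha hb, hcast, Complex.ofReal_re]

theorem intervalIntegral_rpow_mul_eq_rpow_mul_comp_mul_left {ε : ℝ} (hε : 0 < ε) (γ : ℝ)
    (h : ℝ → ℝ) :
    ∫ x in (0 : ℝ)..ε, x ^ (-γ) * h x = ε ^ (1 - γ) * ∫ y in (0 : ℝ)..1, y ^ (-γ) * h (ε * y) := by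
  have hscale : ∫ y in (0 : ℝ)..1, y ^ (-γ) * h (ε * y)
      = ε ^ γ * ∫ y in (0 : ℝ)..1, (ε * y) ^ (-γ) * h (ε * y) := by
    rw [← intervalIntegral.integral_const_mul]
    refine intervalIntegral.integral_congr fun y hy => ?_
    rw [uIcc_of_le zero_le_one] at hy
    rw [Real.mul_rpow hε.le hy.1, Real.rpow_neg hε.le]
    field_simp
  rw [hscale, intervalIntegral.integral_comp_mul_left (fun x => x ^ (-γ) * h x) hε.ne',
    mul_zero, mul_one, smul_eq_mul, ← mul_assoc, ← mul_assoc, ← Real.rpow_add hε,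
    ← Real.rpow_neg_one, ← Real.rpow_add hε]
  norm_num

theorem rpow_mul_intervalIntegral_rpow_mul_one_sub_pow_le {ε γ : ℝ} (hε₀ : 0 < ε) (hε₁ : ε ≤ 1)
    (hγ : γ < 1) (m : ℕ) :
    ε ^ (1 - γ) * ∫ y in (0 : ℝ)..1, y ^ (-γ) * (1 - y) ^ m
      ≤ ∫ x in (0 : ℝ)..ε, x ^ (-γ) * (1 - x) ^ m := by
  rw [intervalIntegral_rpow_mul_eq_rpow_mul_comp_mul_left hε₀ γ (fun x => (1 - x) ^ m)]
  have hrpow : IntervalIntegrable (fun y : ℝ => y ^ (-γ)) volume 0 1 :=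
    intervalIntegral.intervalIntegrable_rpow' (by linarith)
  refine mul_le_mul_of_nonneg_left (intervalIntegral.integral_mono_on zero_le_one
    (hrpow.mul_continuousOn (by fun_prop)) (hrpow.mul_continuousOn (by fun_prop))
    fun y hy => ?_) (by positivity)
  obtain ⟨hy₀, hy₁⟩ := hy
  gcongr
  nlinarith

theorem setIntegral_mul_le_setIntegral_of_ofReal_setIntegral_le {α : Type*} [MeasurableSpace α]
    {ν Λ : Measure α} {g f : α → ℝ} {t : Set α} (ht : MeasurableSet t)
    (hg : IntegrableOn g t ν) (hg₀ : ∀ x ∈ t, 0 ≤ g x)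
    (hf : IntegrableOn f t Λ) (hf₀ : ∀ x ∈ t, 0 ≤ f x)
    (hΛ : ∀ s, MeasurableSet s → s ⊆ t → ENNReal.ofReal (∫ x in s, g x ∂ν) ≤ Λ s) :
    ∫ x in t, g x * f x ∂ν ≤ ∫ x in t, f x ∂Λ := by
  set μ := (ν.restrict t).withDensity fun x => ENNReal.ofReal (g x)
  have hμ : μ ≤ Λ.restrict t := by
    refine Measure.le_iff.2 fun s hs => ?_
    have hst : s ∩ t ⊆ t := inter_subset_right
    rw [Measure.restrict_apply hs, withDensity_apply _ hs, Measure.restrict_restrict hs,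
      ← ofReal_integral_eq_lintegral_ofReal (hg.mono_set hst)
        (ae_restrict_of_forall_mem (hs.inter ht) fun x hx => hg₀ x (hst hx))]
    exact hΛ _ (hs.inter ht) hst
  have hμf : ∫ x, f x ∂μ = ∫ x in t, g x * f x ∂ν := by
    rw [integral_withDensity_eq_integral_toReal_smul₀
      hg.aestronglyMeasurable.aemeasurable.ennreal_ofReal
      (ae_of_all _ fun _ => ENNReal.ofReal_lt_top)]
    refine setIntegral_congr_fun ht fun x hx => ?_
    rw [ENNReal.toReal_ofReal (hg₀ x hx), smul_eq_mul]
  rw [← hμf]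
  exact integral_mono_measure hμ (ae_restrict_of_forall_mem ht hf₀) hf

theorem coalRate_nonneg (Λ : Measure ℝ) (b k : ℕ) : 0 ≤ coalRate Λ b k :=
  setIntegral_nonneg measurableSet_Icc fun _ hx =>
    mul_nonneg (pow_nonneg hx.1 _) (pow_nonneg (sub_nonneg.2 hx.2) _)

theorem choose_two_mul_coalRate_two_le_totalRate (Λ : Measure ℝ) {n : ℕ} (hn : 2 ≤ n) :
    (n.choose 2 : ℝ) * coalRate Λ n 2 ≤ totalRate Λ n :=
  Finset.single_le_sum (f := fun k => (n.choose k : ℝ) * coalRate Λ n k)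
    (fun k _ => mul_nonneg (n.choose k).cast_nonneg (coalRate_nonneg Λ n k))
    (Finset.mem_Icc.2 ⟨le_rfl, hn⟩)

theorem mul_intervalIntegral_le_coalRate_two (Λ : Measure ℝ) [IsFiniteMeasure Λ]
    {c ε γ : ℝ} (hc : 0 < c) (hε₀ : 0 < ε) (hε₁ : ε ≤ 1) (hγ : γ < 1)
    (hΛ : ∀ s : Set ℝ, MeasurableSet s → s ⊆ Icc 0 ε →
      ENNReal.ofReal (∫ x in s, c * x ^ (-γ)) ≤ Λ s) (n : ℕ) :
    c * ∫ x in (0 : ℝ)..ε, x ^ (-γ) * (1 - x) ^ (n - 2) ≤ coalRate Λ n 2 := by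
  have hsub : Icc (0 : ℝ) ε ⊆ Icc 0 1 := Icc_subset_Icc_right hε₁
  have hf : IntegrableOn (fun x : ℝ => (1 - x) ^ (n - 2)) (Icc 0 1) Λ :=
    (by fun_prop : Continuous fun x : ℝ => (1 - x) ^ (n - 2)).continuousOn.integrableOn_compact
      isCompact_Icc
  have hf₀ : ∀ x ∈ Icc (0 : ℝ) 1, 0 ≤ (1 - x) ^ (n - 2) := fun x hx =>
    pow_nonneg (sub_nonneg.2 hx.2) _
  have hg : IntegrableOn (fun x : ℝ => c * x ^ (-γ)) (Icc 0 ε) := by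
    rw [integrableOn_Icc_iff_integrableOn_Ioc,
      ← intervalIntegrable_iff_integrableOn_Ioc_of_le hε₀.le]
    exact (intervalIntegral.intervalIntegrable_rpow' (by linarith)).const_mul c
  calc c * ∫ x in (0 : ℝ)..ε, x ^ (-γ) * (1 - x) ^ (n - 2)
      = ∫ x in Icc 0 ε, c * x ^ (-γ) * (1 - x) ^ (n - 2) := by
        rw [integral_Icc_eq_integral_Ioc, ← intervalIntegral.integral_of_le hε₀.le,
          ← intervalIntegral.integral_const_mul]
        simp only [mul_assoc]
    _ ≤ ∫ x in Icc 0 ε, (1 - x) ^ (n - 2) ∂Λ :=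
        setIntegral_mul_le_setIntegral_of_ofReal_setIntegral_le measurableSet_Icc hg
          (fun x hx => mul_nonneg hc.le (Real.rpow_nonneg hx.1 _)) (hf.mono_set hsub)
          (fun x hx => hf₀ x (hsub hx)) hΛ
    _ ≤ ∫ x in Icc 0 1, (1 - x) ^ (n - 2) ∂Λ :=
        setIntegral_mono_set hf (ae_restrict_of_forall_mem measurableSet_Icc hf₀)
          hsub.eventuallyLE
    _ = coalRate Λ n 2 := by simp [coalRate]

theorem Gamma_mul_Gamma_div_Gamma_eq_intervalIntegral {γ : ℝ} (hγ : γ < 1) (m : ℕ) :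
    Real.Gamma (1 - γ) * Real.Gamma ((m + 2 : ℕ) - 1) / Real.Gamma ((m + 2 : ℕ) - γ)
      = ∫ y in (0 : ℝ)..1, y ^ (-γ) * (1 - y) ^ m := by
  have hbeta := intervalIntegral_rpow_mul_one_sub_rpow_eq_beta (a := 1 - γ) (b := m + 1)
    (by linarith) (by positivity)
  simp only [ProbabilityTheory.beta, sub_sub_cancel_left, add_sub_cancel_right,
    Real.rpow_natCast] at hbeta
  rw [hbeta, show ((m + 2 : ℕ) : ℝ) - 1 = m + 1 by push_cast; ring,
    show ((m + 2 : ℕ) : ℝ) - γ = 1 - γ + (m + 1) by push_cast; ring]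

theorem choose_two_mul_Gamma_sub_one (m : ℕ) :
    ((m + 2).choose 2 : ℝ) * Real.Gamma ((m + 2 : ℕ) - 1)
      = (m + 2 : ℕ) / 2 * (m + 1).factorial := by
  rw [show ((m + 2 : ℕ) : ℝ) - 1 = m + 1 by push_cast; ring, Real.Gamma_nat_eq_factorial,
    Nat.cast_choose_two, Nat.factorial_succ]
  push_cast
  ring

/-- Under the (c,ε,γ)-property, λ_n ≥ C(n,2) c ε^{1-γ} B(1-γ, n-1), i.e.
λ_n ≥ (c ε^{1-γ} n / 2) · (n−1)! Γ(1−γ)/Γ(n−γ), for all n ≥ 2. -/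
theorem totalRate_ge_beta_bound (Λ : Measure ℝ) [IsFiniteMeasure Λ]
    (c ε γ : ℝ) (hc : 0 < c) (hε : ε ∈ Set.Ioo (0 : ℝ) 1) (hγ : γ ∈ Set.Ioo (0 : ℝ) 1)
    (hΛ : ∀ s : Set ℝ, MeasurableSet s → s ⊆ Set.Icc 0 ε →
      ENNReal.ofReal (∫ x in s, c * x ^ (-γ)) ≤ Λ s) :
    ∀ n : ℕ, 2 ≤ n →
      ((n.choose 2 : ℝ) * (c * ε ^ (1 - γ)) *
          (Real.Gamma (1 - γ) * Real.Gamma ((n : ℝ) - 1) / Real.Gamma ((n : ℝ) - γ))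
        ≤ totalRate Λ n) ∧
      (c * ε ^ (1 - γ) * (n : ℝ) / 2 *
          (((n - 1).factorial : ℝ) * Real.Gamma (1 - γ) / Real.Gamma ((n : ℝ) - γ))
        ≤ totalRate Λ n) := by
  intro n hn
  obtain ⟨m, rfl⟩ : ∃ m, n = m + 2 := ⟨n - 2, by omega⟩
  have hbound : ((m + 2).choose 2 : ℝ) * (c * ε ^ (1 - γ)) *
      (Real.Gamma (1 - γ) * Real.Gamma ((m + 2 : ℕ) - 1) / Real.Gamma ((m + 2 : ℕ) - γ))
      ≤ totalRate Λ (m + 2) :=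
    calc _ = ((m + 2).choose 2 : ℝ) *
          (c * (ε ^ (1 - γ) * ∫ y in (0 : ℝ)..1, y ^ (-γ) * (1 - y) ^ m)) := by
          rw [Gamma_mul_Gamma_div_Gamma_eq_intervalIntegral hγ.2]; ring
      _ ≤ ((m + 2).choose 2 : ℝ) * (c * ∫ x in (0 : ℝ)..ε, x ^ (-γ) * (1 - x) ^ m) := by
          gcongr
          exact rpow_mul_intervalIntegral_rpow_mul_one_sub_pow_le hε.1 hε.2.le hγ.2 m
      _ ≤ ((m + 2).choose 2 : ℝ) * coalRate Λ (m + 2) 2 := by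
          gcongr
          exact mul_intervalIntegral_le_coalRate_two Λ hc hε.1 hε.2.le hγ.2 hΛ (m + 2)
      _ ≤ totalRate Λ (m + 2) := choose_two_mul_coalRate_two_le_totalRate Λ hn
  refine ⟨hbound, le_of_eq_of_le ?_ hbound⟩
  rw [show m + 2 - 1 = m + 1 by omega]
  linear_combination (-(c * ε ^ (1 - γ) * Real.Gamma (1 - γ) / Real.Gamma ((m + 2 : ℕ) - γ))) *
    choose_two_mul_Gamma_sub_one m
end

section
/- For γ ∈ (0,1) and n ≥ 2, the product B = Π_{l=2}^{n−1} l/(l−γ) satisfies ln B ≥ γ ln((n−γ)/(2−γ)) − γ²/(2(1−γ)), hence B ≥ ((n−γ)/(2−γ))^γ e^{−γ²/(2(1−γ))}. -/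
/-!
Each factor satisfies `log (l / (l - γ)) ≥ γ / l`, and `∑_{l=a}^{b-1} 1/l ≥ log (b / a)` because
`log (l + 1) - log l ≤ 1 / l`. Replacing `γ log (b / a)` by `γ log ((b - γ) / (a - γ))` costs at
most `γ log (a / (a - γ)) ≤ γ² / (a - γ)`, and `γ² / (2 - γ) ≤ γ² / (2 (1 - γ))`.
-/

open Finset Real

lemma div_le_log_div_sub {γ x : ℝ} (hx : 0 < x) (hγx : γ < x) : γ / x ≤ log (x / (x - γ)) := by
  have h := one_sub_inv_le_log_of_pos (div_pos hx (sub_pos.mpr hγx))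
  rwa [inv_div, one_sub_div hx.ne', sub_sub_cancel] at h

lemma div_sub_pos {γ x : ℝ} (hγ : 0 ≤ γ) (hγx : γ < x) : 0 < x / (x - γ) :=
  div_pos (hγ.trans_lt hγx) (sub_pos.mpr hγx)

lemma log_sub_log_le_sum_inv {a b : ℕ} (ha : 0 < a) (hab : a ≤ b) :
    log b - log a ≤ ∑ l ∈ Ico a b, (l : ℝ)⁻¹ := by
  rw [← sum_Ico_sub (fun l : ℕ => log l) hab]
  refine sum_le_sum fun l hl => ?_
  have hl : (0 : ℝ) < l := by exact_mod_cast ha.trans_le (mem_Ico.mp hl).1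
  rw [Nat.cast_add_one, ← log_div (by positivity) hl.ne']
  calc log ((l + 1) / l) ≤ (l + 1) / l - 1 := log_le_sub_one_of_pos (by positivity)
    _ = (l : ℝ)⁻¹ := by field_simp; ring

lemma log_div_sub_le {γ a x : ℝ} (hγ : 0 ≤ γ) (hγa : γ < a) (hγx : γ < x) :
    log ((x - γ) / (a - γ)) ≤ log (x / a) + γ / (a - γ) := by
  have ha : 0 < a := hγ.trans_lt hγa
  have hx : 0 < x := hγ.trans_lt hγx
  have haγ : 0 < a - γ := sub_pos.mpr hγa
  calc log ((x - γ) / (a - γ)) ≤ log (x / (a - γ)) :=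
        log_le_log (div_pos (sub_pos.mpr hγx) haγ) (by gcongr; linarith)
    _ = log (x / a) + log (a / (a - γ)) := by
        rw [← log_mul (by positivity) (by positivity), div_mul_div_cancel₀ ha.ne']
    _ ≤ log (x / a) + γ / (a - γ) := by
        gcongr
        calc log (a / (a - γ)) ≤ a / (a - γ) - 1 := log_le_sub_one_of_pos (by positivity)
          _ = γ / (a - γ) := by field_simp; ring

lemma log_prod_div_sub_ge {γ : ℝ} {a b : ℕ} (hγ : 0 ≤ γ) (hγa : γ < a) (hab : a ≤ b) :
    γ * log ((b - γ) / (a - γ)) - γ ^ 2 / (a - γ) ≤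
      log (∏ l ∈ Ico a b, (l : ℝ) / (l - γ)) := by
  have ha : (0 : ℝ) < a := hγ.trans_lt hγa
  have hγl : ∀ l ∈ Ico a b, γ < (l : ℝ) := fun l hl =>
    hγa.trans_le (by exact_mod_cast (mem_Ico.mp hl).1)
  have hb : γ < (b : ℝ) := hγa.trans_le (by exact_mod_cast hab)
  rw [log_prod fun l hl => (div_sub_pos hγ (hγl l hl)).ne']
  calc γ * log ((b - γ) / (a - γ)) - γ ^ 2 / (a - γ)
      ≤ γ * (log (b / a) + γ / (a - γ)) - γ ^ 2 / (a - γ) := by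
        gcongr; exact log_div_sub_le hγ hγa hb
    _ = γ * (log b - log a) := by
        rw [log_div (hγ.trans_lt hb).ne' ha.ne']; ring
    _ ≤ γ * ∑ l ∈ Ico a b, (l : ℝ)⁻¹ := by
        gcongr; exact log_sub_log_le_sum_inv (by exact_mod_cast ha) hab
    _ = ∑ l ∈ Ico a b, γ / l := by
        rw [mul_sum]; rfl
    _ ≤ ∑ l ∈ Ico a b, log (l / (l - γ)) :=
        sum_le_sum fun l hl => div_le_log_div_sub (hγ.trans_lt (hγl l hl)) (hγl l hl)

/-- For γ ∈ (0,1) and n ≥ 2, the product B = Π_{l=2}^{n−1} l/(l−γ) satisfies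
ln B ≥ γ ln((n−γ)/(2−γ)) − γ²/(2(1−γ)), hence
B ≥ ((n−γ)/(2−γ))^γ exp(−γ²/(2(1−γ))). -/
theorem log_prod_lower_bound (γ : ℝ) (hγ : γ ∈ Set.Ioo (0 : ℝ) 1) (n : ℕ) (hn : 2 ≤ n) :
    (γ * Real.log (((n : ℝ) - γ) / (2 - γ)) - γ ^ 2 / (2 * (1 - γ))
        ≤ Real.log (∏ l ∈ Finset.Icc 2 (n - 1), (l : ℝ) / ((l : ℝ) - γ))) ∧
      ((((n : ℝ) - γ) / (2 - γ)) ^ γ * Real.exp (-γ ^ 2 / (2 * (1 - γ)))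
        ≤ ∏ l ∈ Finset.Icc 2 (n - 1), (l : ℝ) / ((l : ℝ) - γ)) := by
  obtain ⟨hγ0, hγ1⟩ := hγ
  rw [Icc_sub_one_right_eq_Ico_of_not_isMin (by simp only [isMin_iff_eq_bot, Nat.bot_eq_zero]; omega)]
  have hlog : γ * log ((n - γ) / (2 - γ)) - γ ^ 2 / (2 * (1 - γ)) ≤
      log (∏ l ∈ Ico 2 n, (l : ℝ) / (l - γ)) := by
    refine le_trans ?_ (log_prod_div_sub_ge (a := 2) hγ0.le (by norm_num; linarith) hn)
    push_cast
    gcongr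
    linarith
  refine ⟨hlog, ?_⟩
  have hpos : 0 < ∏ l ∈ Ico 2 n, (l : ℝ) / (l - γ) := prod_pos fun l hl => by
    have hl : (2 : ℝ) ≤ l := by exact_mod_cast (mem_Ico.mp hl).1
    exact div_sub_pos hγ0.le (by linarith)
  have hn' : (2 : ℝ) ≤ n := by exact_mod_cast hn
  rw [rpow_def_of_pos (div_pos (by linarith) (by linarith)),
    neg_div, ← exp_add, mul_comm, ← sub_eq_add_neg]
  exact (le_log_iff_exp_le hpos).mp hlog
end
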